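/- Let G be a loopless multigraph with vertex set V, |V| = n, and edges e_1, …, e_m (unordered pairs of distinct vertices, parallel edges allowed), and let Δ be the maximum degree of G, where the degree of v is the number of indices i with v ∈ e_i. Construct a bipartite graph G' = (A, B, F) as follows: A = V; for each vertex v, B contains a set S_v of exactly Δ vertices, consisting of one vertex v_{(i)} for each edge index i with v ∈ e_i together with Δ − deg(v) additional filler vertices, and B is the disjoint union of the sets S_v; F contains the edge {v, w} for every v ∈ A and every w ∈ S_v, and additionally, for every edge e_i = {u_i, v_i} of G, the edges {u_i, (v_i)_{(i)}} and {v_i, (u_i)_{(i)}}. Then for every bijection π : V → {1,…,n}, the minimum cardinality of a set F' ⊆ (A × B) ∖ F such that in the bipartite graph (A, B, F ∪ F') the neighborhoods of A are nested along π (i.e., for all u, v ∈ A with π(u) ≤ π(v), every B-neighbor of u is also a B-neighbor of v) equals (∑_{i=1}^m |π(u_i) − π(v_i)|) + Δ·n·(n−1)/2 − 2m. -/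

import Mathlib

open Finset

/-- The vertex `v` is an endpoint of the edge with index `i`. -/
def Inc {V : Type*} {m : ℕ} (E : Fin m → V × V) (v : V) (i : Fin m) : Prop :=
  (E i).1 = v ∨ (E i).2 = v

/-- The degree of `v` in the multigraph with edge family `E`: the number of edge indices
`i` with `v ∈ e_i`. -/
def mdeg {V : Type*} [DecidableEq V] {m : ℕ} (E : Fin m → V × V) (v : V) : ℕ :=
  (Finset.univ.filter fun i => (E i).1 = v ∨ (E i).2 = v).card

/-- The maximum degree of the multigraph with edge family `E`. -/
def maxDeg {V : Type*} [Fintype V] [DecidableEq V] {m : ℕ} (E : Fin m → V × V) : ℕ :=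
  Finset.univ.sup (mdeg E)

/-- The right side `B` of the bipartite graph of Yannakakis' reduction: it is the disjoint
union over the vertices `v` of the sets `S_v`, where `S_v` consists of one vertex
`v_{(i)}` for each edge index `i` with `v ∈ e_i`, together with `Δ − deg(v)` filler
vertices (`Δ` being the maximum degree), so that `|S_v| = Δ`. -/
def Bvert {V : Type*} [Fintype V] [DecidableEq V] {m : ℕ} (E : Fin m → V × V) : Type _ :=
  Σ v : V, ({i : Fin m // Inc E v i} ⊕ Fin (maxDeg E - mdeg E v))

/-- The edges of the bipartite graph of Yannakakis' reduction: `a ∈ A = V` is joined to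
`w ∈ B` iff `w ∈ S_a`, or `w = u_{(i)}` for some edge `e_i = {a, u}` (i.e. `w` is the copy
of the other endpoint `u` of an edge `e_i` incident to `a`). -/
def Frel {V : Type*} [Fintype V] [DecidableEq V] {m : ℕ} (E : Fin m → V × V)
    (a : V) (w : Bvert E) : Prop :=
  w.1 = a ∨ ∃ (i : Fin m) (h : Inc E w.1 i),
    w.2 = Sum.inl ⟨i, h⟩ ∧
      (((E i).1 = a ∧ (E i).2 = w.1) ∨ ((E i).1 = w.1 ∧ (E i).2 = a))

/-!
For `w ∈ B` let `μ(w)` be the least `π`-position of an `F`-neighbour of `w`. A nested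
completion must contain every pair `(v, w) ∉ F` with `π(v) ≥ μ(w)`, and these pairs alone
already nest the neighbourhoods; so the minimum is `∑_w (n - μ(w) - deg_F w)`. A filler of
`S_x` has `μ = π(x)` and one neighbour, while the copy of `x` on the edge `e_i = {x, y}` has
`μ = min(π x, π y)` and two neighbours. Measured against `n - 1 - π(x)`, whose sum over `B`
is `Δ · n(n-1)/2`, the fillers contribute nothing more and the two copies of `e_i` contribute
`|π x - π y| - 2`.
-/

theorem sub_min_add_sub_min {α : Type*} [AddCommGroup α] [LinearOrder α] [IsOrderedAddMonoid α]
    (a b : α) : a - min a b + (b - min a b) = |a - b| := by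
  rw [sub_add_sub_comm, ← min_add_max a b, add_sub_add_left_eq_sub, max_sub_min_eq_abs']

section EquivFin

variable {V : Type*} [Fintype V] {n : ℕ} (π : V ≃ Fin n)

theorem card_filter_le_val_equivFin (k : ℕ) : #{v : V | k ≤ π v} = n - k := by
  have hlt := Fin.card_filter_val_lt (n := n) (m := k)
  have hsplit := card_filter_add_card_filter_not (s := (univ : Finset (Fin n))) (fun t => t < k)
  rw [card_univ, Fintype.card_fin] at hsplit
  rw [← card_map π.toEmbedding, map_filter, map_univ_equiv]
  simp only [not_lt, Function.comp_def, Equiv.apply_symm_apply] at hsplit ⊢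
  omega

theorem sum_sub_one_sub_val_equivFin :
    ∑ v, ((n : ℤ) - 1 - π v) = ((n * (n - 1) / 2 : ℕ) : ℤ) := by
  calc ∑ v, ((n : ℤ) - 1 - π v) = ∑ t : Fin n, ((n : ℤ) - 1 - t) :=
        π.sum_comp (fun t : Fin n => (n : ℤ) - 1 - t)
    _ = ∑ t : Fin n, ((t.rev : ℕ) : ℤ) := by
        refine sum_congr rfl fun t _ => ?_
        rw [Fin.val_rev]
        omega
    _ = ∑ t : Fin n, ((t : ℕ) : ℤ) :=
        Equiv.sum_comp Fin.revPerm (fun t : Fin n => ((t : ℕ) : ℤ))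
    _ = ((n * (n - 1) / 2 : ℕ) : ℤ) := by
        rw [← Nat.cast_sum, Fin.sum_univ_eq_sum_range (fun i => i), sum_range_id]

end EquivFin

section NestedCompletion

variable {α β γ : Type*} [Fintype α] [Fintype β] [Preorder γ] [DecidableLE γ]
  (R : α → β → Prop) [DecidableRel R] (r : α → γ) (μ : β → γ)

/-- The pairs that must be added to `R` to make the neighbourhoods nested along `r`, when
`μ w` is the least rank of an `R`-neighbour of `w`. -/
def nestedCompletion : Finset (α × β) := univ.filter fun p => μ p.2 ≤ r p.1 ∧ ¬ R p.1 p.2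

theorem isLeast_card_nestedCompletion (hle : ∀ u w, R u w → μ w ≤ r u)
    (hmin : ∀ w, ∃ u, R u w ∧ r u = μ w) :
    IsLeast {k : ℕ | ∃ F' : Finset (α × β), (∀ q ∈ F', ¬ R q.1 q.2) ∧
        (∀ u v : α, r u ≤ r v →
          ∀ w : β, (R u w ∨ (u, w) ∈ F') → (R v w ∨ (v, w) ∈ F')) ∧
        F'.card = k}
      #(nestedCompletion R r μ) := by
  refine ⟨⟨_, fun q hq => (mem_filter.1 hq).2.2, ?_, rfl⟩, ?_⟩
  · intro u v huv w hw
    by_cases hvw : R v w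
    · exact Or.inl hvw
    · refine Or.inr (mem_filter.2 ⟨mem_univ _, ?_, hvw⟩)
      rcases hw with hw | hw
      · exact (hle u w hw).trans huv
      · exact (mem_filter.1 hw).2.1.trans huv
  · rintro k ⟨F', -, hnest, rfl⟩
    refine card_le_card fun ⟨v, w⟩ hp => ?_
    obtain ⟨-, hμ, hvw⟩ := mem_filter.1 hp
    obtain ⟨u, huw, hu⟩ := hmin w
    exact (hnest u v (hu ▸ hμ) w (Or.inl huw)).resolve_left hvw

theorem card_nestedCompletion_eq_sum (hle : ∀ u w, R u w → μ w ≤ r u) :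
    (#(nestedCompletion R r μ) : ℤ) = ∑ w, ((#{v | μ w ≤ r v} : ℤ) - #{v | R v w}) := by
  classical
  rw [nestedCompletion, card_filter, Fintype.sum_prod_type_right, Nat.cast_sum]
  refine sum_congr rfl fun w _ => ?_
  rw [← card_filter, filter_and_not, card_sdiff_of_subset, Nat.cast_sub (card_le_card ?_)] <;>
  · intro v
    simp only [mem_filter, mem_univ, true_and]
    exact hle v w

end NestedCompletion

section Yannakakis

variable {V : Type*} [Fintype V] [DecidableEq V] {m : ℕ} (E : Fin m → V × V)

instance (v : V) (i : Fin m) : Decidable (Inc E v i) := inferInstanceAs (Decidable (_ ∨ _))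

instance : Fintype (Bvert E) := inferInstanceAs (Fintype (Σ _, _ ⊕ _))

instance (a : V) (w : Bvert E) : Decidable (Frel E a w) := inferInstanceAs (Decidable (_ ∨ _))

/-- The vertex `x_{(i)}` of `S_x`. -/
def Bvert.copy (x : V) (s : {i // Inc E x i}) : Bvert E := ⟨x, .inl s⟩

def Bvert.filler (x : V) (t : Fin (maxDeg E - mdeg E x)) : Bvert E := ⟨x, .inr t⟩

section Sums

variable {M : Type*} [AddCommMonoid M]

theorem Bvert.sum_eq (f : Bvert E → M) :
    ∑ w, f w = ∑ p : Σ x, {i // Inc E x i}, f (.copy E p.1 p.2)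
      + ∑ q : Σ x, Fin (maxDeg E - mdeg E x), f (.filler E q.1 q.2) := by
  refine (Fintype.sum_equiv (Equiv.sigmaSumDistrib _ _) f
    (Sum.elim (fun p => f (.copy E p.1 p.2)) (fun q => f (.filler E q.1 q.2))) ?_).trans
    (Fintype.sum_sum_type _)
  rintro ⟨x, s | t⟩ <;> rfl

theorem sum_sigma_inc (hloop : ∀ i, (E i).1 ≠ (E i).2) (g : V → Fin m → M) :
    ∑ p : Σ x, {i // Inc E x i}, g p.1 p.2 = ∑ i, (g (E i).1 i + g (E i).2 i) := by
  rw [Fintype.sum_sigma]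
  calc ∑ x, ∑ s : {i // Inc E x i}, g x s = ∑ x, ∑ i ∈ univ.filter (Inc E x), g x i :=
        sum_congr rfl fun x _ => (sum_subtype _ (fun i => by simp) (g x)).symm
    _ = ∑ i, ∑ x ∈ {(E i).1, (E i).2}, g x i := sum_comm' fun x i => by simp [Inc, eq_comm]
    _ = _ := sum_congr rfl fun i _ => sum_pair (hloop i)

theorem Bvert.sum_comp_fst (g : V → M) : ∑ w : Bvert E, g w.1 = maxDeg E • ∑ x, g x := by
  have hcard (x : V) :
      Fintype.card ({i // Inc E x i} ⊕ Fin (maxDeg E - mdeg E x)) = maxDeg E := by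
    rw [Fintype.card_sum, Fintype.card_subtype, Fintype.card_fin]
    exact Nat.add_sub_of_le (le_sup (f := mdeg E) (mem_univ x))
  rw [smul_sum]
  refine (Fintype.sum_sigma _).trans (sum_congr rfl fun x _ => ?_)
  change ∑ _ : {i // Inc E x i} ⊕ Fin (maxDeg E - mdeg E x), g x = _
  rw [sum_const, card_univ, hcard]

end Sums

theorem frel_copy_iff {u x : V} (s : {i // Inc E x i}) :
    Frel E u (.copy E x s) ↔ u = (E s.1).1 ∨ u = (E s.1).2 := by
  obtain ⟨i, h | h⟩ := s <;>
  · subst h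
    unfold Frel Bvert.copy
    aesop

theorem frel_filler_iff {u x : V} (t : Fin (maxDeg E - mdeg E x)) :
    Frel E u (.filler E x t) ↔ u = x := by
  simp [Frel, Bvert.filler, eq_comm]

theorem card_frel_copy (hloop : ∀ i, (E i).1 ≠ (E i).2) {x : V} (s : {i // Inc E x i}) :
    #{u | Frel E u (.copy E x s)} = 2 := by
  rw [← card_pair (hloop s.1)]
  congr 1
  ext u
  simp [frel_copy_iff]

theorem card_frel_filler {x : V} (t : Fin (maxDeg E - mdeg E x)) :
    #{u | Frel E u (.filler E x t)} = 1 := by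
  rw [← card_singleton x]
  congr 1
  ext u
  simp [frel_filler_iff]

variable {n : ℕ} (π : V ≃ Fin n)

/-- The `π`-position of the leftmost `F`-neighbour of `w`. -/
def firstNbrPos : Bvert E → ℕ
  | ⟨_, .inl s⟩ => min (π (E s.1).1) (π (E s.1).2)
  | ⟨x, .inr _⟩ => π x

@[simp]
theorem firstNbrPos_copy (x : V) (s : {i // Inc E x i}) :
    firstNbrPos E π (.copy E x s) = min (π (E s.1).1 : ℕ) (π (E s.1).2) := rfl

@[simp]
theorem firstNbrPos_filler (x : V) (t : Fin (maxDeg E - mdeg E x)) :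
    firstNbrPos E π (.filler E x t) = π x := rfl

theorem firstNbrPos_le_of_frel {u : V} {w : Bvert E} (hu : Frel E u w) :
    firstNbrPos E π w ≤ π u := by
  obtain ⟨x, s | t⟩ := w
  · rcases (frel_copy_iff E s).1 hu with rfl | rfl
    exacts [min_le_left _ _, min_le_right _ _]
  · rw [(frel_filler_iff E t).1 hu]
    rfl

theorem exists_frel_firstNbrPos (w : Bvert E) :
    ∃ u, Frel E u w ∧ π u = firstNbrPos E π w := by
  obtain ⟨x, s | t⟩ := w
  · rcases le_total (π (E s.1).1 : ℕ) (π (E s.1).2) with hle | hle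
    · exact ⟨(E s.1).1, (frel_copy_iff E s).2 (.inl rfl), (min_eq_left hle).symm⟩
    · exact ⟨(E s.1).2, (frel_copy_iff E s).2 (.inr rfl), (min_eq_right hle).symm⟩
  · exact ⟨x, (frel_filler_iff E t).2 rfl, rfl⟩

theorem card_firstNbrPos_le_sub_card_frel_copy (hloop : ∀ i, (E i).1 ≠ (E i).2) (x : V)
    (s : {i // Inc E x i}) :
    (#{v | firstNbrPos E π (.copy E x s) ≤ π v} : ℤ) - #{v | Frel E v (.copy E x s)} =
      ((n : ℤ) - 1 - π x) + ((π x : ℤ) - min (π (E s.1).1 : ℕ) (π (E s.1).2) - 1) := by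
  rw [card_filter_le_val_equivFin, card_frel_copy E hloop, firstNbrPos_copy,
    Nat.cast_sub ((min_le_left _ _).trans (π _).isLt.le)]
  push_cast
  ring

theorem card_firstNbrPos_le_sub_card_frel_filler (x : V) (t : Fin (maxDeg E - mdeg E x)) :
    (#{v | firstNbrPos E π (.filler E x t) ≤ π v} : ℤ) - #{v | Frel E v (.filler E x t)} =
      (n : ℤ) - 1 - π x := by
  rw [card_filter_le_val_equivFin, card_frel_filler, firstNbrPos_filler,
    Nat.cast_sub (π x).isLt.le]
  push_cast
  ring

theorem card_nestedCompletion_add_two_mul (hloop : ∀ i, (E i).1 ≠ (E i).2) :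
    (#(nestedCompletion (Frel E) (fun v => (π v : ℕ)) (firstNbrPos E π)) : ℤ) + 2 * m =
      ∑ i, |((π (E i).1 : ℕ) : ℤ) - ((π (E i).2 : ℕ) : ℤ)| +
        ((maxDeg E * (n * (n - 1) / 2) : ℕ) : ℤ) := by
  have hbase : ∑ p : Σ x, {i // Inc E x i}, ((n : ℤ) - 1 - π p.1) +
      ∑ q : Σ x, Fin (maxDeg E - mdeg E x), ((n : ℤ) - 1 - π q.1) =
        ((maxDeg E * (n * (n - 1) / 2) : ℕ) : ℤ) := by
    calc _ = maxDeg E • ∑ x, ((n : ℤ) - 1 - π x) :=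
          (Bvert.sum_eq E fun w => (n : ℤ) - 1 - π w.1).symm.trans
            (Bvert.sum_comp_fst E fun x => (n : ℤ) - 1 - π x)
      _ = _ := by rw [sum_sub_one_sub_val_equivFin, nsmul_eq_mul, Nat.cast_mul]
  have hexcess : ∑ p : Σ x, {i // Inc E x i},
      ((π p.1 : ℤ) - min (π (E p.2).1 : ℕ) (π (E p.2).2) - 1) =
        ∑ i, |((π (E i).1 : ℕ) : ℤ) - ((π (E i).2 : ℕ) : ℤ)| - 2 * m := by
    rw [sum_sigma_inc E hloop fun x i => (π x : ℤ) - min (π (E i).1 : ℕ) (π (E i).2) - 1]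
    calc _ = ∑ i, (|((π (E i).1 : ℕ) : ℤ) - ((π (E i).2 : ℕ) : ℤ)| - 2) :=
          sum_congr rfl fun i _ => by
            rw [← sub_min_add_sub_min]
            push_cast
            ring
      _ = _ := by simp [sum_sub_distrib, mul_comm]
  rw [card_nestedCompletion_eq_sum (Frel E) (fun v => (π v : ℕ)) (firstNbrPos E π)
    (fun _ _ => firstNbrPos_le_of_frel E π), Bvert.sum_eq]
  simp only [card_firstNbrPos_le_sub_card_frel_copy E π hloop,
    card_firstNbrPos_le_sub_card_frel_filler E π, sum_add_distrib]
  linear_combination hbase + hexcess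

end Yannakakis

theorem ola_to_chain_cost {V : Type*} [Fintype V] [DecidableEq V] {m : ℕ}
    (E : Fin m → V × V) (hloop : ∀ i, (E i).1 ≠ (E i).2)
    (n : ℕ) (π : V ≃ Fin n) :
    ∃ c : ℕ,
      IsLeast {k : ℕ |
        ∃ F' : Finset (V × Bvert E),
          (∀ q ∈ F', ¬ Frel E q.1 q.2) ∧
          (∀ u v : V, (π u : ℕ) ≤ (π v : ℕ) →
            ∀ w : Bvert E, (Frel E u w ∨ (u, w) ∈ F') → (Frel E v w ∨ (v, w) ∈ F')) ∧
          F'.card = k} c ∧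
      (c : ℤ) + 2 * (m : ℤ) =
        (∑ i : Fin m, |((π (E i).1 : ℕ) : ℤ) - ((π (E i).2 : ℕ) : ℤ)|) +
          ((maxDeg E * (n * (n - 1) / 2) : ℕ) : ℤ) :=
  ⟨_, isLeast_card_nestedCompletion (Frel E) (fun v => (π v : ℕ)) (firstNbrPos E π)
    (fun _ _ => firstNbrPos_le_of_frel E π) (exists_frel_firstNbrPos E π),
    card_nestedCompletion_add_two_mul E π hloop⟩
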